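/- arXiv:2401.11468 — 5 statements merged into one kernel-verified Lean document; each statement's English description precedes it below -/
import Mathlib

section
/- Let n ≥ 1 be an integer, a, b ∈ ℝ, t < t₀, and let ψ : [t,t₀] → ℝ be C¹ with ψ'(s) > 0 and (1/(n+1))·(ψ'(s))^{n+1} = exp(ψ(s)+a) + b for all s ∈ [t,t₀]. Then exp(ξ+a) + b > 0 for every ξ ∈ [ψ(t), ψ(t₀)], and ∫_{ψ(t)}^{ψ(t₀)} (exp(ξ+a) + b)^{−1/(n+1)} dξ = (n+1)^{1/(n+1)}·(t₀ − t). -/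
/-!
Along the solution, `exp(ψ + a) + b = ψ'^(n+1)/(n+1)` is positive, and by the intermediate value
theorem every `ξ ∈ [ψ t, ψ t₀]` is such a value `ψ s`. The ODE separates: the integrand at `ψ s`
times `ψ' s` is the constant `(n+1)^(1/(n+1))`, so the substitution `ξ = ψ s` turns the integral
into that constant times `t₀ - t`.
-/

open Set

lemma one_div_mul_pow_rpow_neg_one_div_mul_self {m : ℕ} (hm : m ≠ 0) {x : ℝ} (hx : 0 < x) :
    (1 / (m : ℝ) * x ^ m) ^ (-(1 : ℝ) / m) * x = (m : ℝ) ^ ((1 : ℝ) / m) := by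
  have hm' : (0 : ℝ) < m := by positivity
  have hexponent : (m : ℝ) * (-1 / m) = -1 := by field_simp
  rw [Real.mul_rpow (by positivity) (by positivity), ← Real.rpow_natCast x m,
    ← Real.rpow_mul hx.le, hexponent, Real.rpow_neg_one,
    one_div, Real.inv_rpow hm'.le, neg_div, Real.rpow_neg hm'.le, inv_inv, mul_assoc,
    inv_mul_cancel₀ hx.ne', mul_one, one_div]

lemma integral_comp_eq_mul_sub_of_comp_mul_deriv_eq {f f' g : ℝ → ℝ} {a b c : ℝ} (hab : a ≤ b)
    (hf : ∀ x ∈ Icc a b, HasDerivWithinAt f (f' x) (Icc a b) x)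
    (hf' : ContinuousOn f' (Icc a b)) (hg : ContinuousOn g (f '' Icc a b))
    (hc : ∀ x ∈ Icc a b, g (f x) * f' x = c) :
    ∫ u in f a..f b, g u = c * (b - a) := by
  rw [← uIcc_of_le hab] at hf hf' hg hc
  have hf_cont : ContinuousOn f (uIcc a b) := fun x hx => (hf x hx).continuousWithinAt
  have hf_deriv : ∀ x ∈ Ioo (min a b) (max a b), HasDerivWithinAt f (f' x) (Ioi x) x :=
    fun x hx => (hf x (Ioo_subset_Icc_self hx)).mono_of_mem_nhdsWithin
      (Icc_mem_nhdsGT_of_mem ⟨hx.1.le, hx.2⟩)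
  rw [← intervalIntegral.integral_comp_mul_deriv'' hf_cont hf_deriv hf' hg]
  calc ∫ x in a..b, (g ∘ f) x * f' x = ∫ _ in a..b, c := intervalIntegral.integral_congr hc
    _ = c * (b - a) := by rw [intervalIntegral.integral_const, smul_eq_mul, mul_comm]

theorem statement5_general (n : ℕ) (a b t t₀ : ℝ) (ht : t < t₀)
    (ψ ψ' : ℝ → ℝ)
    (hd : ∀ s ∈ Set.Icc t t₀, HasDerivWithinAt ψ (ψ' s) (Set.Icc t t₀) s)
    (hc : ContinuousOn ψ' (Set.Icc t t₀))
    (hpos : ∀ s ∈ Set.Icc t t₀, 0 < ψ' s)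
    (hODE : ∀ s ∈ Set.Icc t t₀,
      (1 / ((n : ℝ) + 1)) * (ψ' s) ^ (n + 1) = Real.exp (ψ s + a) + b) :
    (∀ ξ ∈ Set.Icc (ψ t) (ψ t₀), 0 < Real.exp (ξ + a) + b) ∧
    (∫ ξ in (ψ t)..(ψ t₀), (Real.exp (ξ + a) + b) ^ (-(1 : ℝ) / ((n : ℝ) + 1))) =
      ((n : ℝ) + 1) ^ ((1 : ℝ) / ((n : ℝ) + 1)) * (t₀ - t) := by
  have hψ_cont : ContinuousOn ψ (Icc t t₀) := fun s hs => (hd s hs).continuousWithinAt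
  have hF_pos : ∀ ξ ∈ ψ '' Icc t t₀, 0 < Real.exp (ξ + a) + b := by
    rintro _ ⟨s, hs, rfl⟩
    rw [← hODE s hs]
    have := hpos s hs
    positivity
  refine ⟨fun ξ hξ => hF_pos ξ (intermediate_value_Icc ht.le hψ_cont hξ), ?_⟩
  refine integral_comp_eq_mul_sub_of_comp_mul_deriv_eq ht.le hd hc ?_ fun s hs => ?_
  · exact ContinuousOn.rpow_const (by fun_prop) fun ξ hξ => .inl (hF_pos ξ hξ).ne'
  · have hconst := one_div_mul_pow_rpow_neg_one_div_mul_self n.succ_ne_zero (hpos s hs)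
    rw [Nat.cast_succ] at hconst
    rw [← hODE s hs, hconst]

/-- If `ψ` is `C¹` on `[t,t₀]` with `ψ' > 0` and satisfies the
first-integral form `(1/(n+1))·(ψ')^(n+1) = exp(ψ+a) + b`, then `exp(ξ+a)+b > 0` for
all `ξ ∈ [ψ(t), ψ(t₀)]` and
`∫_{ψ(t)}^{ψ(t₀)} (exp(ξ+a)+b)^(−1/(n+1)) dξ = (n+1)^(1/(n+1))·(t₀−t)`. -/
theorem statement5 (n : ℕ) (hn : 1 ≤ n) (a b t t₀ : ℝ) (ht : t < t₀)
    (ψ ψ' : ℝ → ℝ)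
    (hd : ∀ s ∈ Set.Icc t t₀, HasDerivWithinAt ψ (ψ' s) (Set.Icc t t₀) s)
    (hc : ContinuousOn ψ' (Set.Icc t t₀))
    (hpos : ∀ s ∈ Set.Icc t t₀, 0 < ψ' s)
    (hODE : ∀ s ∈ Set.Icc t t₀,
      (1 / ((n : ℝ) + 1)) * (ψ' s) ^ (n + 1) = Real.exp (ψ s + a) + b) :
    (∀ ξ ∈ Set.Icc (ψ t) (ψ t₀), 0 < Real.exp (ξ + a) + b) ∧
    (∫ ξ in (ψ t)..(ψ t₀), (Real.exp (ξ + a) + b) ^ (-(1 : ℝ) / ((n : ℝ) + 1))) =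
      ((n : ℝ) + 1) ^ ((1 : ℝ) / ((n : ℝ) + 1)) * (t₀ - t) :=
  statement5_general n a b t t₀ ht ψ ψ' hd hc hpos hODE
end

section
/- Let n ≥ 1 be an integer, a ∈ ℝ, b < 0 and τ < 0 with |b|·|τ|^{n+1} < (n+1)^n. Then there exist T < τ and a C² function ψ : (T,τ] → ℝ with ψ'(t) > 0 and ψ''(t) > 0 for all t ∈ (T,τ], satisfying (ψ'(t))^{n−1}·ψ''(t) = exp(ψ(t)+a) and (1/(n+1))·(ψ'(t))^{n+1} = exp(ψ(t)+a) + b on (T,τ], the matching condition ψ(τ) = ψ_cusp(τ), and the horn boundary conditions lim_{t→T⁺} ψ(t) = log|b| − a and lim_{t→T⁺} ψ'(t) = 0; moreover T satisfies ∫₀^{M} (e^s − 1)^{−1/(n+1)} ds = (n+1)^{1/(n+1)}·|b|^{1/(n+1)}·(τ − T), where M := −(n+1)·log|τ| − log|b| + n·log(n+1). -/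
/-!
Writing `ψ = log |b| - a + U`, the first integral `(ψ')^(n+1) / (n+1) = exp (ψ + a) + b` becomes the
separable equation `U' = ((n+1)|b| (e^U - 1))^(1/(n+1))`. Its solution vanishing at `T` is
`U(t) = F⁻¹(c (t - T))`, where `F(u) = ∫₀ᵘ (e^s - 1)^(-1/(n+1)) ds` and `c = ((n+1)|b|)^(1/(n+1))`.
The matching condition `ψ(τ) = ψ_cusp(τ)` says `U(τ) = M`, and `M > 0` is exactly the hypothesis
`|b||τ|^(n+1) < (n+1)^n`; so `T = τ - F(M)/c`, which is the integral relation. Differentiating the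
first integral gives the Kähler–Einstein equation.
-/

/-- The model cuspidal Kähler–Einstein potential
`ψ_cusp(t) = −(n+1)·log(−t) + n·log(n+1) − a`, defined for `t < 0`. -/
noncomputable def psiCusp (n : ℕ) (a : ℝ) (t : ℝ) : ℝ :=
  -((n : ℝ) + 1) * Real.log (-t) + (n : ℝ) * Real.log ((n : ℝ) + 1) - a

/-- A *horn solution* with data `(n, a, b, T, τ)`: a `C²` function `ψ` on `(T,τ]`
(recorded via its first and second derivative functions `ψ'`, `ψ''`) with
`ψ' > 0`, `ψ'' > 0`, satisfying the Kähler–Einstein ODE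
`(ψ')^(n−1)·ψ'' = exp(ψ+a)` on `(T,τ]`, the matching condition `ψ(τ) = ψ_cusp(τ)`,
and the horn boundary condition `lim_{t→T⁺} ψ(t) = log|b| − a`. -/
structure IsHornSolution (n : ℕ) (a b T τ : ℝ) (ψ ψ' ψ'' : ℝ → ℝ) : Prop where
  deriv1 : ∀ t ∈ Set.Ioc T τ, HasDerivWithinAt ψ (ψ' t) (Set.Ioc T τ) t
  deriv2 : ∀ t ∈ Set.Ioc T τ, HasDerivWithinAt ψ' (ψ'' t) (Set.Ioc T τ) t
  cont2 : ContinuousOn ψ'' (Set.Ioc T τ)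
  pos1 : ∀ t ∈ Set.Ioc T τ, 0 < ψ' t
  pos2 : ∀ t ∈ Set.Ioc T τ, 0 < ψ'' t
  ode : ∀ t ∈ Set.Ioc T τ, (ψ' t) ^ (n - 1) * ψ'' t = Real.exp (ψ t + a)
  matching : ψ τ = psiCusp n a τ
  horn : Filter.Tendsto ψ (nhdsWithin T (Set.Ioc T τ)) (nhds (Real.log |b| - a))

open MeasureTheory intervalIntegral Set Filter Real Topology

section Primitive

variable {h : ℝ → ℝ} {ε : ℝ}

theorem mul_sub_le_integral_of_le {x y : ℝ} (hint : IntervalIntegrable h volume x y)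
    (hh : ∀ s, ε ≤ h s) (hxy : x ≤ y) : ε * (y - x) ≤ ∫ s in x..y, h s := by
  simpa [mul_comm] using integral_mono_on hxy intervalIntegrable_const hint fun s _ => hh s

theorem exists_orderIso_eq_primitive (hint : ∀ x y, IntervalIntegrable h volume x y)
    (hε : 0 < ε) (hh : ∀ s, ε ≤ h s) : ∃ e : ℝ ≃o ℝ, ∀ u, e u = ∫ s in (0 : ℝ)..u, h s := by
  set F : ℝ → ℝ := fun u => ∫ s in (0 : ℝ)..u, h s
  have hgrowth : ∀ x y, x ≤ y → ε * (y - x) ≤ F y - F x := fun x y hxy => by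
    rw [integral_interval_sub_left (hint 0 y) (hint 0 x)]
    exact mul_sub_le_integral_of_le (hint x y) hh hxy
  have hF0 : F 0 = 0 := integral_same
  have hmono : StrictMono F := fun x y hxy => by nlinarith [hgrowth x y hxy.le]
  have hsurj : Function.Surjective F := by
    refine (continuous_primitive hint 0).surjective ?_ ?_
    · refine tendsto_atTop_mono' _ ?_ (tendsto_id.const_mul_atTop hε)
      filter_upwards [eventually_ge_atTop 0] with u hu
      simpa [hF0] using hgrowth 0 u hu
    · refine tendsto_atBot_mono' _ ?_ (tendsto_id.const_mul_atBot hε)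
      filter_upwards [eventually_le_atBot 0] with u hu
      show F u ≤ ε * u
      linarith [hgrowth u 0 hu]
  exact ⟨StrictMono.orderIsoOfSurjective F hmono hsurj, fun _ => rfl⟩

theorem OrderIso.hasDerivAt_symm_of_eq_primitive (e : ℝ ≃o ℝ)
    (he : ∀ u, e u = ∫ s in (0 : ℝ)..u, h s) (hint : ∀ x y, IntervalIntegrable h volume x y)
    {v : ℝ} (hne : h (e.symm v) ≠ 0) (hcont : ContinuousAt h (e.symm v))
    (hmeas : StronglyMeasurableAtFilter h (𝓝 (e.symm v))) :
    HasDerivAt e.symm (h (e.symm v))⁻¹ v := by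
  have hderiv : HasDerivAt e (h (e.symm v)) (e.symm v) := by
    rw [show ⇑e = fun u => ∫ s in (0 : ℝ)..u, h s from funext he]
    exact integral_hasDerivAt_right (hint 0 _) hmeas hcont
  exact hderiv.of_local_left_inverse e.symm.continuous.continuousAt hne
    (Eventually.of_forall e.apply_symm_apply)

end Primitive

theorem hasDerivAt_rpow_inv_natCast {k : ℕ} (hk : k ≠ 0) {x : ℝ} (hx : 0 < x) :
    HasDerivAt (fun y : ℝ => y ^ (k⁻¹ : ℝ)) ((k * (x ^ (k⁻¹ : ℝ)) ^ (k - 1))⁻¹) x := by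
  refine (hasDerivAt_pow k _).of_local_left_inverse
    (continuousAt_rpow_const _ _ (Or.inl hx.ne')) ?_ ?_
  · have : 0 < x ^ (k⁻¹ : ℝ) := rpow_pos_of_pos hx _
    positivity
  · filter_upwards [eventually_gt_nhds hx] with y hy
    exact rpow_inv_natCast_pow hy.le hk

/-- `(e^s - 1)^(-p)` on `(0, M]`, continued by constants outside `(0, M]` so that its primitive
is an order isomorphism of `ℝ`. -/
noncomputable def hornIntegrand (p M s : ℝ) : ℝ :=
  if s ≤ 0 then 1 else (exp (min s M) - 1) ^ (-p)

section HornIntegrand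

variable {p M : ℝ}

theorem hornIntegrand_of_mem_Ioc {s : ℝ} (hs : s ∈ Ioc 0 M) :
    hornIntegrand p M s = (exp s - 1) ^ (-p) := by
  rw [hornIntegrand, if_neg hs.1.not_ge, min_eq_left hs.2]

theorem min_le_hornIntegrand (hp : 0 ≤ p) (hM : 0 < M) (s : ℝ) :
    min 1 ((exp M - 1) ^ (-p)) ≤ hornIntegrand p M s := by
  unfold hornIntegrand
  split_ifs with hs
  · exact min_le_left _ _
  · have hpos : 0 < exp (min s M) - 1 := sub_pos.2 (one_lt_exp_iff.2 (lt_min (not_le.1 hs) hM))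
    refine (min_le_right _ _).trans (rpow_le_rpow_of_nonpos hpos ?_ (neg_nonpos.2 hp))
    gcongr
    exact min_le_right _ _

theorem measurable_hornIntegrand : Measurable (hornIntegrand p M) :=
  Measurable.ite measurableSet_Iic measurable_const (by fun_prop)

theorem continuousOn_hornIntegrand (hM : 0 < M) : ContinuousOn (hornIntegrand p M) (Ioi 0) := by
  refine ContinuousOn.congr (f := fun s => (exp (min s M) - 1) ^ (-p)) ?_
    fun s hs => if_neg (not_le.2 hs)
  exact ContinuousOn.rpow_const (by fun_prop)
    fun s hs => Or.inl (sub_pos.2 (one_lt_exp_iff.2 (lt_min hs hM))).ne'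

/-- The singularity `(e^s - 1)^(-p) ≤ s^(-p)` at `0` is integrable because `p < 1`. -/
theorem intervalIntegrable_hornIntegrand (hp0 : 0 ≤ p) (hp1 : p < 1) (hM : 0 < M) (x y : ℝ) :
    IntervalIntegrable (hornIntegrand p M) volume x y := by
  have hbound : IntervalIntegrable (fun s => 1 + ‖s ^ (-p)‖ + M ^ (-p)) volume x y :=
    ((intervalIntegrable_const.add (intervalIntegrable_rpow' (by linarith)).norm)).add
      intervalIntegrable_const
  refine hbound.mono_fun' measurable_hornIntegrand.aestronglyMeasurable
    (Eventually.of_forall fun s => ?_)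
  have hMp : 0 ≤ M ^ (-p) := (rpow_pos_of_pos hM _).le
  show ‖hornIntegrand p M s‖ ≤ 1 + ‖s ^ (-p)‖ + M ^ (-p)
  unfold hornIntegrand
  split_ifs with hs
  · simp only [norm_one]
    linarith [norm_nonneg (s ^ (-p))]
  · have hs_pos : 0 < s := not_le.1 hs
    have hmin : 0 < min s M := lt_min hs_pos hM
    have hbase : 0 < exp (min s M) - 1 := sub_pos.2 (one_lt_exp_iff.2 hmin)
    have hle : (exp (min s M) - 1) ^ (-p) ≤ (min s M) ^ (-p) :=
      rpow_le_rpow_of_nonpos hmin (by linarith [add_one_le_exp (min s M)]) (neg_nonpos.2 hp0)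
    have hmin_le : (min s M) ^ (-p) ≤ ‖s ^ (-p)‖ + M ^ (-p) := by
      rw [Real.norm_of_nonneg (rpow_pos_of_pos hs_pos _).le]
      rcases min_cases s M with ⟨hm, _⟩ | ⟨hm, _⟩ <;> rw [hm] <;>
        linarith [(rpow_pos_of_pos hs_pos (-p)).le]
    rw [Real.norm_of_nonneg (rpow_pos_of_pos hbase _).le]
    linarith

end HornIntegrand

theorem exists_hornProfile {p M K : ℝ} (hp0 : 0 ≤ p) (hp1 : p < 1) (hM : 0 < M) (hK : 0 < K)
    (τ : ℝ) :
    ∃ T < τ, ∃ U : ℝ → ℝ, Continuous U ∧ U T = 0 ∧ U τ = M ∧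
      (∀ t ∈ Ioc T τ, 0 < U t ∧ HasDerivAt U ((K * (exp (U t) - 1)) ^ p) t) ∧
      ∫ s in (0 : ℝ)..M, (exp s - 1) ^ (-p) = K ^ p * (τ - T) := by
  have hint := intervalIntegrable_hornIntegrand hp0 hp1 hM
  have hε : 0 < min 1 ((exp M - 1) ^ (-p)) :=
    lt_min one_pos (rpow_pos_of_pos (sub_pos.2 (one_lt_exp_iff.2 hM)) _)
  obtain ⟨e, he⟩ := exists_orderIso_eq_primitive hint hε (min_le_hornIntegrand hp0 hM)
  have he0 : e 0 = 0 := by rw [he, integral_same]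
  have heM : e M = ∫ s in (0 : ℝ)..M, (exp s - 1) ^ (-p) := by
    rw [he]
    refine integral_congr_ae (Eventually.of_forall fun s hs => ?_)
    rw [uIoc_of_le hM.le] at hs
    exact hornIntegrand_of_mem_Ioc hs
  have heM_pos : 0 < e M := he0 ▸ e.strictMono hM
  set c := K ^ p
  have hc : 0 < c := rpow_pos_of_pos hK p
  set T := τ - e M / c
  set U : ℝ → ℝ := fun t => e.symm (c * (t - T))
  have hτT : c * (τ - T) = e M := by simp only [T, sub_sub_cancel]; field_simp
  refine ⟨T, by simp only [T]; linarith [div_pos heM_pos hc], U, by fun_prop,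
    by simp only [U, sub_self, mul_zero, e.symm_apply_eq, he0],
    by simp only [U, hτT, e.symm_apply_apply], fun t ht => ?_, by rw [← heM, ← hτT]⟩
  have hUt : U t ∈ Ioc 0 M := by
    refine ⟨e.lt_symm_apply.2 ?_, e.symm_apply_le.2 ?_⟩
    · rw [he0]; exact mul_pos hc (by linarith [ht.1])
    · rw [← hτT]; exact mul_le_mul_of_nonneg_left (by linarith [ht.2]) hc.le
  have hbase : 0 < exp (U t) - 1 := sub_pos.2 (one_lt_exp_iff.2 hUt.1)
  refine ⟨hUt.1, ?_⟩
  have hderiv := (e.hasDerivAt_symm_of_eq_primitive he hint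
    (hε.trans_le (min_le_hornIntegrand hp0 hM _)).ne'
    ((continuousOn_hornIntegrand hM).continuousAt (Ioi_mem_nhds hUt.1))
    measurable_hornIntegrand.stronglyMeasurable.stronglyMeasurableAtFilter).comp t
    (((hasDerivAt_id t).sub_const T).const_mul c)
  refine hderiv.congr_deriv ?_
  rw [show e.symm (c * (t - T)) = U t from rfl, hornIntegrand_of_mem_Ioc hUt, rpow_neg hbase.le,
    inv_inv, mul_rpow hK.le hbase.le]
  ring

/-- Differentiating the first integral `(ψ')^(n+1) = (n+1)·(exp (ψ + a) + b)` gives the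
Kähler–Einstein equation `(ψ')^(n-1)·ψ'' = exp (ψ + a)`. -/
theorem hasDerivAt_firstIntegral_root {n : ℕ} (hn : 1 ≤ n) {a b t : ℝ} {ψ : ℝ → ℝ}
    (hY : 0 < ((n : ℝ) + 1) * (exp (ψ t + a) + b))
    (hψ : HasDerivAt ψ ((((n : ℝ) + 1) * (exp (ψ t + a) + b)) ^ ((n : ℝ) + 1)⁻¹) t) :
    HasDerivAt (fun s => (((n : ℝ) + 1) * (exp (ψ s + a) + b)) ^ ((n : ℝ) + 1)⁻¹)
      (exp (ψ t + a) / ((((n : ℝ) + 1) * (exp (ψ t + a) + b)) ^ ((n : ℝ) + 1)⁻¹) ^ (n - 1)) t := by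
  set y := (((n : ℝ) + 1) * (exp (ψ t + a) + b)) ^ ((n : ℝ) + 1)⁻¹
  have hy : 0 < y := rpow_pos_of_pos hY _
  have hroot := hasDerivAt_rpow_inv_natCast (Nat.succ_ne_zero n) hY
  rw [show ((n + 1 : ℕ) : ℝ) = (n : ℝ) + 1 by push_cast; rfl, Nat.succ_sub_one] at hroot
  refine (hroot.comp t (((hψ.add_const a).exp.add_const b).const_mul _)).congr_deriv ?_
  have hpow : y ^ n = y ^ (n - 1) * y := by rw [← pow_succ, Nat.sub_add_cancel hn]
  rw [hpow]
  field_simp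

theorem exists_hornSolution_of_profile {n : ℕ} (hn : 1 ≤ n) {a b T τ : ℝ} (hb : b < 0)
    (hτ : τ < 0) {U : ℝ → ℝ} (hUc : ContinuousAt U T) (hUT : U T = 0)
    (hUτ : U τ = -((n : ℝ) + 1) * log |τ| - log |b| + n * log ((n : ℝ) + 1))
    (hU : ∀ t ∈ Ioc T τ,
      0 < U t ∧ HasDerivAt U ((((n : ℝ) + 1) * |b| * (exp (U t) - 1)) ^ ((n : ℝ) + 1)⁻¹) t) :
    ∃ ψ ψ' ψ'' : ℝ → ℝ, IsHornSolution n a b T τ ψ ψ' ψ'' ∧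
      (∀ t ∈ Ioc T τ, (1 / ((n : ℝ) + 1)) * (ψ' t) ^ (n + 1) = exp (ψ t + a) + b) ∧
      Tendsto ψ' (𝓝[Ioc T τ] T) (𝓝 0) := by
  set p : ℝ := ((n : ℝ) + 1)⁻¹
  set ψ : ℝ → ℝ := fun t => log |b| - a + U t
  set Y : ℝ → ℝ := fun t => ((n : ℝ) + 1) * (exp (ψ t + a) + b)
  set ψ' : ℝ → ℝ := fun t => Y t ^ p
  have hexp : ∀ t, exp (ψ t + a) = |b| * exp (U t) := fun t => by
    rw [show ψ t + a = log |b| + U t by simp only [ψ]; ring, exp_add,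
      exp_log (abs_pos.2 hb.ne)]
  have hY : ∀ t, Y t = ((n : ℝ) + 1) * |b| * (exp (U t) - 1) := fun t => by
    simp only [Y, hexp, abs_of_neg hb]; ring
  have hY_pos : ∀ t ∈ Ioc T τ, 0 < Y t := fun t ht => by
    rw [hY]
    have := sub_pos.2 (one_lt_exp_iff.2 (hU t ht).1)
    have := abs_pos.2 hb.ne
    positivity
  have hψ : ∀ t ∈ Ioc T τ, HasDerivAt ψ (ψ' t) t := fun t ht => by
    rw [show ψ' t = _ from congrArg (· ^ p) (hY t)]
    exact (hU t ht).2.const_add _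
  have hψ'_pos : ∀ t ∈ Ioc T τ, 0 < ψ' t := fun t ht => rpow_pos_of_pos (hY_pos t ht) p
  have hψ' : ∀ t ∈ Ioc T τ, HasDerivAt ψ' (exp (ψ t + a) / ψ' t ^ (n - 1)) t := fun t ht =>
    hasDerivAt_firstIntegral_root hn (hY_pos t ht) (hψ t ht)
  refine ⟨ψ, ψ', fun t => exp (ψ t + a) / ψ' t ^ (n - 1),
    ⟨fun t ht => (hψ t ht).hasDerivWithinAt, fun t ht => (hψ' t ht).hasDerivWithinAt,
      fun t ht => ?_, hψ'_pos, fun t ht => div_pos (exp_pos _) (pow_pos (hψ'_pos t ht) _),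
      fun t ht => mul_div_cancel₀ _ (pow_pos (hψ'_pos t ht) _).ne', ?_, ?_⟩,
    fun t ht => ?_, ?_⟩
  · exact (((hψ t ht).continuousAt.add_const a).rexp.div ((hψ' t ht).continuousAt.pow _)
      (pow_pos (hψ'_pos t ht) _).ne').continuousWithinAt
  · simp only [ψ, psiCusp, hUτ, abs_of_neg hτ]
    ring
  · have : ψ T = log |b| - a := by simp only [ψ, hUT, add_zero]
    exact this ▸ (hUc.const_add _).tendsto.mono_left nhdsWithin_le_nhds
  · have hroot := rpow_inv_natCast_pow (hY_pos t ht).le n.succ_ne_zero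
    rw [show ((n + 1 : ℕ) : ℝ) = (n : ℝ) + 1 by push_cast; rfl] at hroot
    rw [hroot]
    simp only [Y]
    field_simp
  · have hYT : Y T = 0 := by simp only [hY, hUT, exp_zero, sub_self, mul_zero]
    have hψ'T : ψ' T = 0 := by simp only [ψ', hYT]; exact zero_rpow (by positivity)
    have hYc : ContinuousAt Y T := by
      rw [show Y = _ from funext hY]; fun_prop
    exact hψ'T ▸ ((continuous_rpow_const (by positivity)).continuousAt.comp hYc).tendsto.mono_left
      nhdsWithin_le_nhds

/-- Existence of the horn solution: for `b < 0`, `τ < 0` with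
`|b|·|τ|^(n+1) < (n+1)^n` there exist `T < τ` and a horn solution `ψ` on `(T,τ]`
which moreover satisfies the first-integral form with constant `b`, whose derivative
tends to `0` at the horn `t → T⁺`, and where `T` is determined by the integral relation
`∫₀^M (e^s−1)^(−1/(n+1)) ds = (n+1)^(1/(n+1))·|b|^(1/(n+1))·(τ−T)` with
`M = −(n+1)·log|τ| − log|b| + n·log(n+1)`. -/
theorem statement6 (n : ℕ) (hn : 1 ≤ n) (a b τ : ℝ) (hb : b < 0) (hτ : τ < 0)
    (hbτ : |b| * |τ| ^ (n + 1) < ((n : ℝ) + 1) ^ n) :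
    ∃ T : ℝ, T < τ ∧ ∃ ψ ψ' ψ'' : ℝ → ℝ,
      IsHornSolution n a b T τ ψ ψ' ψ'' ∧
      (∀ t ∈ Set.Ioc T τ,
        (1 / ((n : ℝ) + 1)) * (ψ' t) ^ (n + 1) = Real.exp (ψ t + a) + b) ∧
      Filter.Tendsto ψ' (nhdsWithin T (Set.Ioc T τ)) (nhds 0) ∧
      (∫ s in (0 : ℝ)..(-((n : ℝ) + 1) * Real.log |τ| - Real.log |b| +
            (n : ℝ) * Real.log ((n : ℝ) + 1)),
          (Real.exp s - 1) ^ (-(1 : ℝ) / ((n : ℝ) + 1))) =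
        ((n : ℝ) + 1) ^ ((1 : ℝ) / ((n : ℝ) + 1)) * |b| ^ ((1 : ℝ) / ((n : ℝ) + 1)) *
          (τ - T) := by
  have hb' : 0 < |b| := abs_pos.2 hb.ne
  have hτ' : 0 < |τ| := abs_pos.2 hτ.ne
  have hM : 0 < -((n : ℝ) + 1) * log |τ| - log |b| + n * log ((n : ℝ) + 1) := by
    have hlog := log_lt_log (by positivity) hbτ
    rw [log_mul hb'.ne' (by positivity), log_pow, log_pow] at hlog
    push_cast at hlog
    linarith
  have hp1 : ((n : ℝ) + 1)⁻¹ < 1 :=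
    inv_lt_one_of_one_lt₀ (by linarith [(Nat.one_le_cast (α := ℝ)).2 hn])
  obtain ⟨T, hTτ, U, hUc, hUT, hUτ, hU, hint⟩ :=
    exists_hornProfile (K := ((n : ℝ) + 1) * |b|) (by positivity) hp1 hM (by positivity) τ
  obtain ⟨ψ, ψ', ψ'', hsol, hfirst, hψ'⟩ :=
    exists_hornSolution_of_profile (a := a) hn hb hτ hUc.continuousAt hUT hUτ hU
  refine ⟨T, hTτ, ψ, ψ', ψ'', hsol, hfirst, hψ', ?_⟩
  rw [neg_div, one_div, ← mul_rpow (by positivity) hb'.le]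
  exact hint
end

section
/- Let n ≥ 1 be an integer. There exist ε₀ > 0 and C > 0 depending only on n such that the following holds. Let a ∈ ℝ, b < 0 and τ < 0 with |b|·|τ|^{n+1} ≤ ε₀, and let ψ : [2τ,τ] → ℝ be C¹ with ψ'(t) > 0 and (1/(n+1))·(ψ'(t))^{n+1} = exp(ψ(t)+a) + b for all t ∈ [2τ,τ], and ψ(τ) = ψ_cusp(τ). Then |ψ(t) − ψ_cusp(t)| ≤ C·|b|·|τ|^{n+1} for all t ∈ [2τ,τ]. -/
set_option maxHeartbeats 1000000

lemma exp_psiCusp (n : ℕ) (a : ℝ) {t : ℝ} (ht : t < 0) :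
    Real.exp (psiCusp n a t + a) = ((n : ℝ) + 1) ^ n / (-t) ^ (n + 1) := by
  have htpos : (0:ℝ) < -t := by linarith
  have h1 : Real.exp ((n : ℝ) * Real.log ((n : ℝ) + 1)) = ((n : ℝ) + 1) ^ n := by
    rw [← Real.log_pow, Real.exp_log (by positivity)]
  have h2 : Real.exp (-(((n : ℝ) + 1) * Real.log (-t))) = ((-t) ^ (n + 1))⁻¹ := by
    rw [Real.exp_neg]
    congr 1
    rw [show ((n : ℝ) + 1) = ((n + 1 : ℕ) : ℝ) by push_cast; ring,
      ← Real.log_pow, Real.exp_log (by positivity)]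
  have : psiCusp n a t + a
      = -(((n : ℝ) + 1) * Real.log (-t)) + (n : ℝ) * Real.log ((n : ℝ) + 1) := by
    unfold psiCusp; ring
  rw [this, Real.exp_add, h1, h2]
  ring

lemma psiCusp_hasDerivAt (n : ℕ) (a : ℝ) {t : ℝ} (ht : t < 0) :
    HasDerivAt (psiCusp n a) (((n : ℝ) + 1) / (-t)) t := by
  have htne : -t ≠ 0 := by linarith
  have h1 : HasDerivAt (fun u : ℝ => Real.log (-u)) (t⁻¹) t := by
    have h := (Real.hasDerivAt_log htne).comp t (hasDerivAt_neg t)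
    have he : (-t)⁻¹ * (-1) = t⁻¹ := by
      rw [inv_neg]; ring
    rw [he] at h
    exact h
  have h2 := h1.const_mul (-((n : ℝ) + 1))
  have h3 := (h2.add_const ((n : ℝ) * Real.log ((n : ℝ) + 1))).sub_const a
  have heq : (fun u : ℝ => -((n : ℝ) + 1) * Real.log (-u)
      + (n : ℝ) * Real.log ((n : ℝ) + 1) - a) = psiCusp n a := rfl
  rw [heq] at h3
  convert h3 using 1
  have htne2 : t ≠ 0 := ne_of_lt ht
  · rfl
  · rfl
  rw [div_neg, div_eq_mul_inv, neg_mul]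

/-- There are `ε₀, C > 0` depending only on `n` such that any `C¹`
solution `ψ` of the first-integral ODE `(1/(n+1))·(ψ')^(n+1) = exp(ψ+a) + b` on
`[2τ,τ]` with `ψ' > 0`, `ψ(τ) = ψ_cusp(τ)`, `b < 0`, `τ < 0` and
`|b|·|τ|^(n+1) ≤ ε₀` satisfies `|ψ − ψ_cusp| ≤ C·|b|·|τ|^(n+1)` on `[2τ,τ]`. -/
theorem statement8 (n : ℕ) (hn : 1 ≤ n) :
    ∃ ε₀ : ℝ, 0 < ε₀ ∧ ∃ C : ℝ, 0 < C ∧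
      ∀ (a b τ : ℝ) (ψ ψ' : ℝ → ℝ), b < 0 → τ < 0 → |b| * |τ| ^ (n + 1) ≤ ε₀ →
        (∀ t ∈ Set.Icc (2 * τ) τ, HasDerivWithinAt ψ (ψ' t) (Set.Icc (2 * τ) τ) t) →
        ContinuousOn ψ' (Set.Icc (2 * τ) τ) →
        (∀ t ∈ Set.Icc (2 * τ) τ, 0 < ψ' t) →
        (∀ t ∈ Set.Icc (2 * τ) τ,
          (1 / ((n : ℝ) + 1)) * (ψ' t) ^ (n + 1) = Real.exp (ψ t + a) + b) →
        ψ τ = psiCusp n a τ →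
        ∀ t ∈ Set.Icc (2 * τ) τ, |ψ t - psiCusp n a t| ≤ C * |b| * |τ| ^ (n + 1) := by
  refine ⟨1, one_pos, (2:ℝ)^(n+2), by positivity, ?_⟩
  intro a b τ ψ ψ' hb hτ hε hderiv hcont hpos hode hinit
  have hnpos : (0:ℝ) < (n:ℝ) + 1 := by positivity
  have hτpos : (0:ℝ) < -τ := by linarith
  set L : ℝ := -τ with hL
  have hbabs : |b| = -b := abs_of_neg hb
  have hbpos : 0 < |b| := abs_pos.mpr (ne_of_lt hb)
  -- the shift constant
  set M : ℝ := 2 * |b| * (2 * (-τ)) ^ (n + 1) / ((n : ℝ) + 1) ^ n with hM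
  have hMpos : 0 < M := by positivity
  set c : ℝ := Real.log (1 + M) with hc
  have hcpos : 0 < c := Real.log_pos (by linarith)
  have hexpc : Real.exp c = 1 + M := Real.exp_log (by linarith)
  -- basic facts about points of the interval
  have hmem : ∀ s ∈ Set.Icc (0:ℝ) L, τ - s ∈ Set.Icc (2*τ) τ := by
    intro s hs
    constructor <;> [skip; skip] <;> · simp only [Set.mem_Icc, hL] at hs ⊢; linarith [hs.1, hs.2]
  have htneg : ∀ t ∈ Set.Icc (2*τ) τ, t < 0 := fun t ht => lt_of_le_of_lt ht.2 hτ
  have htpos2 : ∀ t ∈ Set.Icc (2*τ) τ, 0 < -t := fun t ht => by have := htneg t ht; linarith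
  -- continuity of ψ on the interval
  have hψcont : ContinuousOn ψ (Set.Icc (2*τ) τ) :=
    fun t ht => (hderiv t ht).continuousWithinAt
  -- reversed inner map
  have hinner : ∀ s : ℝ, HasDerivAt (fun u : ℝ => τ - u) (-1) s := by
    intro s
    simpa using (hasDerivAt_id s).const_sub τ
  have hmapsTo : Set.MapsTo (fun u : ℝ => τ - u) (Set.Icc 0 L) (Set.Icc (2*τ) τ) :=
    fun s hs => hmem s hs
  -- reversed ψ derivative within Ici
  have hfderiv : ∀ s ∈ Set.Ico (0:ℝ) L,
      HasDerivWithinAt (fun u => ψ (τ - u)) (-(ψ' (τ - s))) (Set.Ici s) s := by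
    intro s hs
    have h1 : HasDerivWithinAt (fun u => ψ (τ - u)) (ψ' (τ - s) * (-1)) (Set.Icc 0 L) s :=
      (hderiv (τ - s) (hmem s (Set.mem_Icc_of_Ico hs))).comp s
        ((hinner s).hasDerivWithinAt) hmapsTo
    have h2 := h1.mono_of_mem_nhdsWithin (Icc_mem_nhdsGE_of_mem hs)
    simpa using h2
  -- reversed cusp derivative (full HasDerivAt on relevant points, within Ici)
  have hBderiv : ∀ s ∈ Set.Ico (0:ℝ) L,
      HasDerivAt (fun u => psiCusp n a (τ - u)) (-(((n:ℝ)+1) / (-(τ - s)))) s := by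
    intro s hs
    have ht : τ - s < 0 := htneg _ (hmem s (Set.mem_Icc_of_Ico hs))
    have := (psiCusp_hasDerivAt n a ht).comp s (hinner s)
    simpa [Function.comp_def] using this
  have hBcont : ContinuousOn (fun u => psiCusp n a (τ - u)) (Set.Icc 0 L) := by
    intro s hs
    have ht : τ - s < 0 := htneg _ (hmem s hs)
    exact (((psiCusp_hasDerivAt n a ht).comp s (hinner s)).continuousAt).continuousWithinAt
  have hfcont : ContinuousOn (fun u => ψ (τ - u)) (Set.Icc 0 L) :=
    hψcont.comp (Continuous.continuousOn (by continuity)) hmapsTo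
  -- ODE rearranged
  have hode' : ∀ t ∈ Set.Icc (2*τ) τ,
      (ψ' t) ^ (n + 1) = ((n:ℝ)+1) * (Real.exp (ψ t + a) + b) := by
    intro t ht
    have := hode t ht
    field_simp at this ⊢
    linarith
  -- power identity
  have hpowid : ∀ t : ℝ, 0 < -t →
      ((n:ℝ)+1) * (((n : ℝ) + 1) ^ n / (-t) ^ (n + 1)) = (((n:ℝ)+1) / (-t)) ^ (n+1) := by
    intro t ht
    rw [div_pow, pow_succ]
    ring
  ------------------------------------------------------------------
  -- LOWER BOUND : psiCusp ≤ ψ on the interval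
  ------------------------------------------------------------------
  have lower : ∀ s ∈ Set.Icc (0:ℝ) L, psiCusp n a (τ - s) ≤ ψ (τ - s) := by
    apply image_le_of_deriv_right_lt_deriv_boundary' hBcont
      (fun s hs => (hBderiv s hs).hasDerivWithinAt)
      (by simp [hinit]) hfcont hfderiv
    intro s hs heq
    have htmem := hmem s (Set.mem_Icc_of_Ico hs)
    set t := τ - s with htdef
    have htpos : 0 < -t := htpos2 t htmem
    have hψ't := hpos t htmem
    -- show ψ' t < (n+1)/(-t)
    have key : ψ' t < ((n:ℝ)+1) / (-t) := by
      have h1 : (ψ' t) ^ (n+1) < (((n:ℝ)+1) / (-t)) ^ (n+1) := by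
        rw [hode' t htmem, ← heq, exp_psiCusp n a (by linarith : t < 0),
          ← hpowid t htpos]
        have : ((n:ℝ)+1) * b < 0 := mul_neg_of_pos_of_neg hnpos hb
        nlinarith
      exact lt_of_pow_lt_pow_left₀ (n+1) (by positivity) h1
    simpa using neg_lt_neg key
  ------------------------------------------------------------------
  -- UPPER BOUND : ψ ≤ psiCusp + c on the interval
  ------------------------------------------------------------------
  have upper : ∀ s ∈ Set.Icc (0:ℝ) L, ψ (τ - s) ≤ psiCusp n a (τ - s) + c := by
    apply image_le_of_deriv_right_lt_deriv_boundary' hfcont hfderiv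
      (by simp [hinit]; linarith)
      (hBcont.add continuousOn_const)
      (fun s hs => ((hBderiv s hs).add_const c).hasDerivWithinAt)
    intro s hs heq
    have htmem := hmem s (Set.mem_Icc_of_Ico hs)
    set t := τ - s with htdef
    have htpos : 0 < -t := htpos2 t htmem
    have hψ't := hpos t htmem
    have key : ((n:ℝ)+1) / (-t) < ψ' t := by
      have h1 : (((n:ℝ)+1) / (-t)) ^ (n+1) < (ψ' t) ^ (n+1) := by
        rw [hode' t htmem, (show ψ t = psiCusp n a t + c from heq), show psiCusp n a t + c + a = (psiCusp n a t + a) + c by ring,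
          Real.exp_add, exp_psiCusp n a (by linarith : t < 0), hexpc, ← hpowid t htpos]
        -- need : (n+1) * ((n+1)^n/(-t)^(n+1)) < (n+1) * ((n+1)^n/(-t)^(n+1) * (1+M) + b)
        -- i.e. (n+1)^n/(-t)^(n+1) * M > -b
        have hAineq : ((n:ℝ)+1)^n / (2*(-τ))^(n+1) * M ≤ ((n:ℝ)+1)^n / (-t)^(n+1) * M := by
          apply mul_le_mul_of_nonneg_right _ (le_of_lt hMpos)
          apply div_le_div_of_nonneg_left (by positivity) (by positivity)
          apply pow_le_pow_left₀ (le_of_lt htpos)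
          have := htmem.1
          linarith
        have haux : ∀ (A B C : ℝ), A ≠ 0 → B ≠ 0 → A / B * (C * B / A) = C := by
          intro A B C hA hB
          field_simp
        have hAval : ((n:ℝ)+1)^n / (2*(-τ))^(n+1) * M = 2 * |b| := by
          rw [hM]
          exact haux _ _ _ (by positivity) (by positivity)
        rw [hAval] at hAineq
        have hSb : 0 < ((n:ℝ)+1)^n / (-t)^(n+1) * M + b := by
          rw [hbabs] at hAineq; linarith
        nlinarith [mul_pos hnpos hSb]
      exact lt_of_pow_lt_pow_left₀ (n+1) (le_of_lt hψ't) h1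
    simpa using neg_lt_neg key
  ------------------------------------------------------------------
  -- conclusion
  ------------------------------------------------------------------
  have hcM : c ≤ M := by
    have := Real.log_le_sub_one_of_pos (show (0:ℝ) < 1 + M by linarith)
    rw [hc]; linarith
  have hMC : M ≤ (2:ℝ)^(n+2) * |b| * |τ| ^ (n+1) := by
    have habsτ : |τ| = -τ := abs_of_neg hτ
    have hden : (1:ℝ) ≤ ((n:ℝ)+1)^n := one_le_pow₀ (by linarith)
    have h2 : M = (2:ℝ)^(n+2) * |b| * (-τ)^(n+1) / ((n:ℝ)+1)^n := by
      rw [hM, mul_pow, pow_succ ((2:ℝ)) (n+1)]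
      ring
    rw [habsτ, h2]
    exact div_le_self (by positivity) hden
  intro t ht
  have hs : τ - (τ - t) ∈ Set.Icc (2*τ) τ := by simpa using ht
  have hsmem : τ - t ∈ Set.Icc (0:ℝ) L := by
    simp only [Set.mem_Icc, hL]
    constructor <;> [linarith [ht.2]; linarith [ht.1]]
  have hlow := lower _ hsmem
  have hup := upper _ hsmem
  simp only [show τ - (τ - t) = t by ring] at hlow hup
  rw [abs_le]
  constructor
  · linarith
  · calc ψ t - psiCusp n a t ≤ c := by linarith
    _ ≤ M := hcM
    _ ≤ (2:ℝ)^(n+2) * |b| * |τ| ^ (n+1) := hMC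
end

section
/- Let n ≥ 1 be an integer. Then c(n) := ∫₀^∞ (e^s − 1)^{−1/(n+1)} ds is finite, and there exist ε₀ > 0 and C > 0 depending only on n such that the following holds. Let b < 0 and τ < 0 with |b|·|τ|^{n+1} ≤ ε₀, and suppose T ∈ ℝ satisfies ∫₀^{M} (e^s − 1)^{−1/(n+1)} ds = (n+1)^{1/(n+1)}·|b|^{1/(n+1)}·(τ − T), where M := −(n+1)·log|τ| − log|b| + n·log(n+1). Then |T + (n+1)^{−1/(n+1)}·c(n)·|b|^{−1/(n+1)}| ≤ C·|τ|. -/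
/-!
Write `f(s) = (eˢ - 1)^(-1/(n+1))`. Near `0` we have `f(s) ≤ s^(-1/(n+1))`, which is integrable,
and for `s ≥ log 2` we have `eˢ - 1 ≥ eˢ/2`, so `f` decays like `exp(-s/(n+1))`; hence `c(n)` is
finite. Splitting `c(n) = ∫₀^M f + ∫_M^∞ f` and inserting the horn-position relation gives
`T + c(n)/a = τ + a⁻¹ ∫_M^∞ f` with `a = ((n+1)|b|)^(1/(n+1))`. The exponential tail bound yields
`∫_M^∞ f ≤ 2^(1/(n+1)) (n+1) exp(-M/(n+1))`, and `M` is chosen exactly so that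
`(n+1) exp(-M/(n+1)) = a |τ|`. The smallness condition `|b||τ|^(n+1) ≤ (n+1)^n/2` ensures
`M ≥ log 2`, where the tail bound applies.
-/

open MeasureTheory Set Real

namespace HornPosition

lemma continuousOn_exp_sub_one_rpow (e : ℝ) :
    ContinuousOn (fun s : ℝ => (exp s - 1) ^ e) (Ioi 0) := fun _ hs =>
  ((continuous_exp.continuousAt.sub continuousAt_const).rpow_const
    (Or.inl (sub_pos.mpr (one_lt_exp_iff.mpr hs)).ne')).continuousWithinAt

lemma exp_sub_one_rpow_le {e s : ℝ} (he : e ≤ 0) (hs : log 2 ≤ s) :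
    (exp s - 1) ^ e ≤ 2 ^ (-e) * exp (e * s) := by
  have h2 : 2 ≤ exp s := by simpa [exp_log] using exp_le_exp.mpr hs
  calc (exp s - 1) ^ e ≤ (exp s / 2) ^ e := rpow_le_rpow_of_nonpos (by positivity) (by linarith) he
    _ = 2 ^ (-e) * exp (e * s) := by
      rw [div_rpow (exp_pos s).le zero_le_two, ← exp_mul, rpow_neg zero_le_two, mul_comm s,
        div_eq_inv_mul]

lemma integrableOn_Ioi_exp_sub_one_rpow {e M : ℝ} (he : e < 0) (hM : log 2 ≤ M) :
    IntegrableOn (fun s : ℝ => (exp s - 1) ^ e) (Ioi M) := by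
  have hM0 : 0 < M := (log_pos one_lt_two).trans_le hM
  refine ((integrableOn_exp_mul_Ioi he M).const_mul (2 ^ (-e))).mono'
    ((continuousOn_exp_sub_one_rpow e).mono (Ioi_subset_Ioi hM0.le)
      |>.aestronglyMeasurable measurableSet_Ioi) ?_
  filter_upwards [ae_restrict_mem measurableSet_Ioi] with s hs
  have hs0 : 0 < exp s - 1 := sub_pos.mpr (one_lt_exp_iff.mpr (hM0.trans hs))
  rw [norm_of_nonneg (rpow_nonneg hs0.le e)]
  exact exp_sub_one_rpow_le he.le (hM.trans (le_of_lt hs))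

lemma integrableOn_Ioc_exp_sub_one_rpow {e b : ℝ} (he₁ : -1 < e) (he₀ : e ≤ 0) :
    IntegrableOn (fun s : ℝ => (exp s - 1) ^ e) (Ioc 0 b) := by
  rcases le_total b 0 with hb | hb
  · simp [Ioc_eq_empty_of_le hb]
  have hpow : IntegrableOn (fun s : ℝ => s ^ e) (Ioc 0 b) :=
    (intervalIntegrable_iff_integrableOn_Ioc_of_le hb).mp
      (intervalIntegral.intervalIntegrable_rpow' he₁)
  refine hpow.mono' ((continuousOn_exp_sub_one_rpow e).mono Ioc_subset_Ioi_self
    |>.aestronglyMeasurable measurableSet_Ioc) ?_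
  filter_upwards [ae_restrict_mem measurableSet_Ioc] with s hs
  have hs_le : s ≤ exp s - 1 := by linarith [add_one_le_exp s]
  rw [norm_of_nonneg (rpow_nonneg (hs.1.le.trans hs_le) e)]
  exact rpow_le_rpow_of_nonpos hs.1 hs_le he₀

lemma integrableOn_exp_sub_one_rpow {e : ℝ} (he₁ : -1 < e) (he₀ : e < 0) :
    IntegrableOn (fun s : ℝ => (exp s - 1) ^ e) (Ioi 0) := by
  have h := (integrableOn_Ioc_exp_sub_one_rpow he₁ he₀.le (b := log 2)).union
    (integrableOn_Ioi_exp_sub_one_rpow he₀ le_rfl)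
  rwa [Ioc_union_Ioi_eq_Ioi (log_pos one_lt_two).le] at h

lemma integral_Ioi_exp_sub_one_rpow_le {e M : ℝ} (he₁ : -1 ≤ e) (he₀ : e < 0) (hM : log 2 ≤ M) :
    ∫ s in Ioi M, (exp s - 1) ^ e ≤ 2 * (-exp (e * M) / e) := by
  have h2 : (2 : ℝ) ^ (-e) ≤ 2 := by
    simpa using rpow_le_rpow_of_exponent_le one_le_two (neg_le.mpr he₁)
  calc ∫ s in Ioi M, (exp s - 1) ^ e ≤ ∫ s in Ioi M, 2 ^ (-e) * exp (e * s) :=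
        setIntegral_mono_on (integrableOn_Ioi_exp_sub_one_rpow he₀ hM)
          ((integrableOn_exp_mul_Ioi he₀ M).const_mul _) measurableSet_Ioi
          fun s hs => exp_sub_one_rpow_le he₀.le (hM.trans (le_of_lt hs))
    _ = 2 ^ (-e) * (-exp (e * M) / e) := by rw [integral_const_mul, integral_exp_mul_Ioi he₀]
    _ ≤ 2 * (-exp (e * M) / e) :=
        mul_le_mul_of_nonneg_right h2 (div_nonneg_of_nonpos (neg_nonpos.mpr (exp_pos _).le) he₀.le)

variable {n : ℕ} {x y : ℝ}

lemma log_two_le_of_mul_pow_le (hx : 0 < x) (hy : 0 < y)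
    (h : x * y ^ (n + 1) ≤ ((n : ℝ) + 1) ^ n / 2) :
    log 2 ≤ -((n : ℝ) + 1) * log y - log x + n * log ((n : ℝ) + 1) := by
  have hlog := log_le_log (by positivity) h
  rw [log_mul hx.ne' (by positivity), log_pow, log_div (by positivity) two_ne_zero, log_pow]
    at hlog
  push_cast at hlog
  linarith

lemma mul_exp_neg_div_eq (hx : 0 < x) (hy : 0 < y) :
    ((n : ℝ) + 1) * exp (-(1 : ℝ) / ((n : ℝ) + 1) *
        (-((n : ℝ) + 1) * log y - log x + n * log ((n : ℝ) + 1))) =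
      y * (((n : ℝ) + 1) ^ ((1 : ℝ) / ((n : ℝ) + 1)) * x ^ ((1 : ℝ) / ((n : ℝ) + 1))) := by
  have hp : (0 : ℝ) < n + 1 := by positivity
  rw [rpow_def_of_pos hp, rpow_def_of_pos hx, ← exp_add]
  nth_rewrite 1 [← exp_log hp]
  nth_rewrite 2 [← exp_log hy]
  rw [← exp_add, ← exp_add]
  congr 1
  field_simp
  ring

lemma abs_add_div_le_of_integral_split {a c I R τ T K : ℝ} (ha : 0 < a) (hc : I + R = c)
    (hI : I = a * (τ - T)) (hR₀ : 0 ≤ R) (hR : R ≤ K * (|τ| * a)) :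
    |T + c / a| ≤ (1 + K) * |τ| := by
  have hsum : T + c / a = τ + R / a := by
    rw [← hc, hI]
    field_simp
    ring
  have hRa : R / a ≤ K * |τ| := by
    rw [div_le_iff₀ ha]
    linarith
  calc |T + c / a| ≤ |τ| + |R / a| := hsum ▸ abs_add_le _ _
    _ ≤ (1 + K) * |τ| := by rw [abs_of_nonneg (div_nonneg hR₀ ha.le)]; linarith

end HornPosition

open HornPosition

/-- `c(n) := ∫₀^∞ (e^s − 1)^(−1/(n+1)) ds` is finite, and there exist
`ε₀, C > 0` depending only on `n` such that whenever `b < 0`, `τ < 0`,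
`|b|·|τ|^(n+1) ≤ ε₀` and `T` satisfies the horn-position relation
`∫₀^M (e^s−1)^(−1/(n+1)) ds = (n+1)^(1/(n+1))·|b|^(1/(n+1))·(τ−T)` with
`M = −(n+1)·log|τ| − log|b| + n·log(n+1)`, one has
`|T + (n+1)^(−1/(n+1))·c(n)·|b|^(−1/(n+1))| ≤ C·|τ|`. -/
theorem statement10 (n : ℕ) (hn : 1 ≤ n) :
    IntegrableOn (fun s : ℝ => (Real.exp s - 1) ^ (-(1 : ℝ) / ((n : ℝ) + 1)))
        (Set.Ioi 0) ∧
    ∃ ε₀ : ℝ, 0 < ε₀ ∧ ∃ C : ℝ, 0 < C ∧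
      ∀ b τ T : ℝ, b < 0 → τ < 0 → |b| * |τ| ^ (n + 1) ≤ ε₀ →
        (∫ s in (0 : ℝ)..(-((n : ℝ) + 1) * Real.log |τ| - Real.log |b| +
              (n : ℝ) * Real.log ((n : ℝ) + 1)),
            (Real.exp s - 1) ^ (-(1 : ℝ) / ((n : ℝ) + 1))) =
          ((n : ℝ) + 1) ^ ((1 : ℝ) / ((n : ℝ) + 1)) * |b| ^ ((1 : ℝ) / ((n : ℝ) + 1)) *
            (τ - T) →
        |T + ((n : ℝ) + 1) ^ (-(1 : ℝ) / ((n : ℝ) + 1)) *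
            (∫ s in Set.Ioi (0 : ℝ), (Real.exp s - 1) ^ (-(1 : ℝ) / ((n : ℝ) + 1))) *
            |b| ^ (-(1 : ℝ) / ((n : ℝ) + 1))| ≤ C * |τ| := by
  have hp : (1 : ℝ) < n + 1 := by norm_cast; omega
  set e : ℝ := -(1 : ℝ) / ((n : ℝ) + 1) with he
  have he₀ : e < 0 := div_neg_of_neg_of_pos neg_one_lt_zero (by linarith)
  have he₁ : -1 < e := by rw [he, neg_div, neg_lt_neg_iff, div_lt_one (by linarith)]; exact hp
  have hint := integrableOn_exp_sub_one_rpow he₁ he₀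
  refine ⟨hint, ((n : ℝ) + 1) ^ n / 2, by positivity, 3, by norm_num, ?_⟩
  intro b τ T hb hτ hε hrel
  have hb' : 0 < |b| := abs_pos.mpr hb.ne
  have hτ' : 0 < |τ| := abs_pos.mpr hτ.ne
  set M := -((n : ℝ) + 1) * log |τ| - log |b| + n * log ((n : ℝ) + 1)
  have hM : log 2 ≤ M := log_two_le_of_mul_pow_le hb' hτ' hε
  have hM₀ : 0 < M := (log_pos one_lt_two).trans_le hM
  have hsplit := intervalIntegral.integral_interval_add_Ioi hint
    (integrableOn_Ioi_exp_sub_one_rpow he₀ hM)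
  have htail := integral_Ioi_exp_sub_one_rpow_le he₁.le he₀ hM
  have hexp : ((n : ℝ) + 1) * exp (e * M) = |τ| * _ := mul_exp_neg_div_eq hb' hτ'
  have hdiv : -exp (e * M) / e = ((n : ℝ) + 1) * exp (e * M) := by
    rw [he]; field_simp
  have hinv : ((n : ℝ) + 1) ^ e * |b| ^ e =
      (((n : ℝ) + 1) ^ ((1 : ℝ) / ((n : ℝ) + 1)) * |b| ^ ((1 : ℝ) / ((n : ℝ) + 1)))⁻¹ := by
    rw [he, neg_div, rpow_neg (by linarith), rpow_neg hb'.le, mul_inv]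
  rw [mul_right_comm, hinv, ← div_eq_inv_mul]
  refine (abs_add_div_le_of_integral_split (K := 2) (by positivity) hsplit hrel
    (setIntegral_nonneg measurableSet_Ioi fun s hs => ?_) (htail.trans ?_)).trans_eq (by norm_num)
  · exact rpow_nonneg (sub_nonneg.mpr (one_le_exp (hM₀.trans hs).le)) e
  · rw [hdiv, hexp]
end

section
/- Let n ≥ 2 be an integer, let M be an invertible (n−1)×(n−1) complex matrix, v ∈ ℂ^{n−1}, and let F, G, z be nonzero complex numbers. Let M' be the n×n matrix whose top-left (n−1)×(n−1) block is M and whose last row and column are zero, and let w ∈ ℂⁿ have entries w_α = v_α for α ≤ n−1 and w_n = −1/z. Define the n×n matrix g with entries g_{ij} := −F·M'_{ij} + G·w_i·conj(w_j). Then g is invertible, and its inverse is the n×n block matrix h with top-left (n−1)×(n−1) block −F^{−1}·M^{−1}, last column (above the corner) −F^{−1}·z·(M^{−1}v), last row (left of the corner) −F^{−1}·conj(z)·(v^H M^{−1}) (where v^H is the conjugate transpose of v), and bottom-right corner entry |z|²·(F − G·v^H M^{−1} v)/(F·G); that is, g·h = h·g = 1ₙ. -/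
open Matrix

/-- Let `n = m+1 ≥ 2`. Given an invertible `m×m` complex matrix `M`,
`v ∈ ℂᵐ` and nonzero `F, G, z ∈ ℂ`, let `M'` be the `n×n` matrix with top-left block
`M` and last row/column zero (indexed by `Fin m ⊕ Unit`, the `Unit` index playing the
role of the last index `n`), let `w` have entries `wᵅ = vᵅ` for `α ≤ n−1` and
`wₙ = −1/z`, and set `g_{ij} = −F·M'_{ij} + G·wᵢ·conj(wⱼ)`. Then `g` is invertible with
inverse the block matrix `h` with top-left block `−F⁻¹·M⁻¹`, last column
`−F⁻¹·z·(M⁻¹v)`, last row `−F⁻¹·conj(z)·(vᴴM⁻¹)`, and corner entry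
`|z|²·(F − G·vᴴM⁻¹v)/(F·G)`: that is, `g·h = h·g = 1`. -/
theorem statement19 (m : ℕ) (hm : 1 ≤ m)
    (M : Matrix (Fin m) (Fin m) ℂ) (hM : IsUnit M.det)
    (v : Fin m → ℂ) (F G z : ℂ) (hF : F ≠ 0) (hG : G ≠ 0) (hz : z ≠ 0) :
    let M' : Matrix (Fin m ⊕ Unit) (Fin m ⊕ Unit) ℂ := Matrix.fromBlocks M 0 0 0
    let w : Fin m ⊕ Unit → ℂ := Sum.elim v fun _ => -1 / z
    let g : Matrix (Fin m ⊕ Unit) (Fin m ⊕ Unit) ℂ :=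
      Matrix.of fun i j => -F * M' i j + G * w i * starRingEnd ℂ (w j)
    let h : Matrix (Fin m ⊕ Unit) (Fin m ⊕ Unit) ℂ :=
      Matrix.fromBlocks (-F⁻¹ • M⁻¹)
        (Matrix.of fun i _ => -F⁻¹ * z * (M⁻¹ *ᵥ v) i)
        (Matrix.of fun _ j => -F⁻¹ * starRingEnd ℂ z * ((star v) ᵥ* M⁻¹) j)
        (Matrix.of fun _ _ =>
          z * starRingEnd ℂ z * (F - G * (((star v) ᵥ* M⁻¹) ⬝ᵥ v)) / (F * G))
    g * h = 1 ∧ h * g = 1 := by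
  intro M' w g h
  have hMN : M * M⁻¹ = 1 := Matrix.mul_nonsing_inv M hM
  have hNM : M⁻¹ * M = 1 := Matrix.nonsing_inv_mul M hM
  have hcz : starRingEnd ℂ z ≠ 0 := by
    simpa using hz
  have hc1 : starRingEnd ℂ (-1 / z) = -1 / starRingEnd ℂ z := by
    simp [map_div₀]
  have key : h * g = 1 := by
    ext i j
    rcases i with i | _ <;> rcases j with j | _ <;>
      simp only [Matrix.mul_apply, Fintype.sum_sum_type, Finset.univ_unique,
        Finset.sum_singleton, g, h, M', w, Matrix.fromBlocks_apply₁₁,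
        Matrix.fromBlocks_apply₁₂, Matrix.fromBlocks_apply₂₁, Matrix.fromBlocks_apply₂₂,
        Matrix.of_apply, Sum.elim_inl, Sum.elim_inr, Matrix.smul_apply, smul_eq_mul,
        Matrix.zero_apply, Matrix.one_apply, hc1]
    · have e1 : ∑ x : Fin m, -F⁻¹ * M⁻¹ i x * (-F * M x j + G * v x * starRingEnd ℂ (v j))
          = F⁻¹ * F * (M⁻¹ * M) i j
            - F⁻¹ * G * (M⁻¹ *ᵥ v) i * starRingEnd ℂ (v j) := by
        simp only [Matrix.mul_apply, Matrix.mulVec, dotProduct, Finset.mul_sum,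
          Finset.sum_mul, ← Finset.sum_sub_distrib]
        exact Finset.sum_congr rfl fun x _ => by ring
      rw [e1, hNM]
      simp only [Matrix.one_apply, Sum.inl.injEq]
      split_ifs <;> field_simp <;> ring
    · have e2 : ∑ x : Fin m, -F⁻¹ * M⁻¹ i x * (-F * 0 + G * v x * (-1 / starRingEnd ℂ z))
          = -F⁻¹ * G * (-1 / starRingEnd ℂ z) * (M⁻¹ *ᵥ v) i := by
        simp only [Matrix.mulVec, dotProduct, Finset.mul_sum]
        exact Finset.sum_congr rfl fun x _ => by ring
      rw [e2]
      simp only [reduceCtorEq, if_false]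
      field_simp
      ring
    · set u := star v ᵥ* M⁻¹ with hu'
      have e3 : ∑ x : Fin m,
            -F⁻¹ * starRingEnd ℂ z * u x * (-F * M x j + G * v x * starRingEnd ℂ (v j))
          = F⁻¹ * F * starRingEnd ℂ z * ((u ᵥ* M) j)
            - F⁻¹ * starRingEnd ℂ z * G * (u ⬝ᵥ v) * starRingEnd ℂ (v j) := by
        simp only [Matrix.vecMul, dotProduct, Finset.mul_sum, Finset.sum_mul,
          ← Finset.sum_sub_distrib]
        exact Finset.sum_congr rfl fun x _ => by ring
      have hu : u ᵥ* M = star v := by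
        rw [hu', Matrix.vecMul_vecMul, hNM, Matrix.vecMul_one]
      rw [e3, hu]
      simp only [Pi.star_apply, RCLike.star_def, reduceCtorEq, if_false]
      field_simp
      ring
    · set u := star v ᵥ* M⁻¹ with hu'
      have e4 : ∑ x : Fin m,
            -F⁻¹ * starRingEnd ℂ z * u x * (-F * 0 + G * v x * (-1 / starRingEnd ℂ z))
          = -F⁻¹ * starRingEnd ℂ z * G * (-1 / starRingEnd ℂ z) * (u ⬝ᵥ v) := by
        simp only [dotProduct, Finset.mul_sum]
        exact Finset.sum_congr rfl fun x _ => by ring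
      rw [e4]
      simp only [if_true]
      field_simp
      ring
  exact ⟨mul_eq_one_comm.mpr key, key⟩
end
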